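/- For every λ>0 there exists γ₀>0 such that the following holds for all γ∈(0,γ₀) with (2γ)^{-1} a positive even integer and for every positive integer ℓ_− with δ_−:=γℓ_− ≤ 1/100: for all u,v∈ℓ_−ℤ with u≠v and all x∈[u,u+ℓ_−)∩ℤ, y∈[v,v+ℓ_−)∩ℤ with x≠y, one has |J_γ(|x−y|) − J_γ(|u−v|)| ≤ γ·𝟙[ ||u−v|−(2γ)^{-1}| ≤ 2ℓ_− ] + (8λℓ_−/|u−v|³)·𝟙[ |u−v| > (2γ)^{-1} − 2ℓ_− ]. -/

import Mathlib

/-- The Kac coupling with long-range tail: `J_γ(r) = γ` if `|r| ≤ (2γ)⁻¹` and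
`J_γ(r) = λ/r²` otherwise. -/
noncomputable def coupling (lam gam : ℝ) (r : ℝ) : ℝ :=
  if |r| ≤ (2 * gam)⁻¹ then gam else lam / r ^ 2

/-!
Write `R = (2γ)⁻¹`, `D = |u - v|` and `d = |x - y|`; moving from the block corners to points of
the blocks changes the distance by at most `ℓ₋`, so `|d - D| ≤ ℓ₋`. If `D < R - 2ℓ₋` both distances
lie on the plateau and the couplings agree. If `|D - R| ≤ 2ℓ₋` it suffices that every value of
`J_γ` lies in `[0, γ]`, which holds as soon as `4λγ ≤ 1`. If `D > R + 2ℓ₋` both distances lie in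
the tail, and since `d ≥ D / 2` the difference `λ|D² - d²| / (d²D²)` is at most `8λℓ₋ / D³`.
-/

theorem abs_abs_sub_sub_abs_sub_le_of_mem_Ico {α : Type*} [AddCommGroup α] [LinearOrder α]
    [IsOrderedAddMonoid α] {u v x y ℓ : α} (hx : x ∈ Set.Ico u (u + ℓ))
    (hy : y ∈ Set.Ico v (v + ℓ)) : |(|x - y| - |u - v|)| ≤ ℓ := by
  have hxu : |(x - u) - (y - v)| ≤ ℓ :=
    abs_sub_le_of_nonneg_of_le (sub_nonneg.mpr hx.1) (sub_le_iff_le_add'.mpr hx.2.le)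
      (sub_nonneg.mpr hy.1) (sub_le_iff_le_add'.mpr hy.2.le)
  calc |(|x - y| - |u - v|)| ≤ |(x - y) - (u - v)| := abs_abs_sub_abs_le_abs_sub _ _
    _ = |(x - u) - (y - v)| := by congr 1; abel
    _ ≤ ℓ := hxu

theorem abs_div_sq_sub_div_sq_le {c d D ℓ : ℝ} (hc : 0 ≤ c) (hD : 0 < D) (hdD : |d - D| ≤ ℓ)
    (hℓD : 2 * ℓ ≤ D) : |c / d ^ 2 - c / D ^ 2| ≤ 8 * c * ℓ / D ^ 3 := by
  have hℓ : 0 ≤ ℓ := (abs_nonneg _).trans hdD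
  have hd : D / 2 ≤ d := by linarith [(abs_le.mp hdD).1]
  have hd0 : 0 < d := by linarith
  have hsum : (D + d) * D ≤ 8 * d ^ 2 := by nlinarith
  rw [div_sub_div _ _ (by positivity) (by positivity), abs_div,
    abs_of_pos (by positivity : (0 : ℝ) < d ^ 2 * D ^ 2), div_le_div_iff₀ (by positivity) (by positivity)]
  calc |c * D ^ 2 - d ^ 2 * c| * D ^ 3 = c * |d - D| * ((D + d) * D) * D ^ 2 := by
        rw [show c * D ^ 2 - d ^ 2 * c = c * (D - d) * (D + d) by ring, abs_mul, abs_mul,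
          abs_of_nonneg hc, abs_of_pos (by linarith : 0 < D + d), abs_sub_comm]
        ring
    _ ≤ c * ℓ * (8 * d ^ 2) * D ^ 2 := by gcongr
    _ = 8 * c * ℓ * (d ^ 2 * D ^ 2) := by ring

section coupling

variable {lam gam : ℝ}

theorem coupling_of_abs_le {r : ℝ} (h : |r| ≤ (2 * gam)⁻¹) : coupling lam gam r = gam := if_pos h

theorem coupling_of_lt_abs {r : ℝ} (h : (2 * gam)⁻¹ < |r|) : coupling lam gam r = lam / r ^ 2 :=
  if_neg h.not_ge

theorem coupling_mem_Icc (hlam : 0 ≤ lam) (hgam : 0 < gam) (hlg : 4 * lam * gam ≤ 1) (r : ℝ) :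
    coupling lam gam r ∈ Set.Icc 0 gam := by
  rcases le_or_gt |r| (2 * gam)⁻¹ with hr | hr
  · rw [coupling_of_abs_le hr]
    exact ⟨hgam.le, le_rfl⟩
  · rw [coupling_of_lt_abs hr]
    refine ⟨by positivity, ?_⟩
    calc lam / r ^ 2 ≤ lam / ((2 * gam)⁻¹) ^ 2 := by
          rw [← sq_abs r]
          gcongr
      _ = 4 * lam * gam * gam := by field_simp; ring
      _ ≤ gam := by nlinarith

theorem abs_coupling_sub_coupling_le {ℓ d D : ℝ} (hlam : 0 ≤ lam) (hgam : 0 < gam)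
    (hlg : 4 * lam * gam ≤ 1) (hd : 0 ≤ d) (hD : 0 ≤ D) (hdD : |d - D| ≤ ℓ) :
    |coupling lam gam d - coupling lam gam D| ≤
      (if |D - (2 * gam)⁻¹| ≤ 2 * ℓ then gam else 0) +
        (if D > (2 * gam)⁻¹ - 2 * ℓ then 8 * lam * ℓ / D ^ 3 else 0) := by
  set R := (2 * gam)⁻¹
  have hR : 0 < R := by positivity
  obtain ⟨hdD₁, hdD₂⟩ := abs_le.mp hdD
  have hℓ : 0 ≤ ℓ := (abs_nonneg _).trans hdD
  have hnear_term : 0 ≤ (if |D - R| ≤ 2 * ℓ then gam else 0) := by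
    split_ifs <;> positivity
  have htail_term : 0 ≤ (if D > R - 2 * ℓ then 8 * lam * ℓ / D ^ 3 else 0) := by
    split_ifs <;> positivity
  by_cases hfar : R + 2 * ℓ < D
  · rw [coupling_of_lt_abs (by rw [abs_of_nonneg hd]; linarith),
      coupling_of_lt_abs (by rw [abs_of_nonneg hD]; linarith),
      if_pos (show D > R - 2 * ℓ by linarith)]
    have := abs_div_sq_sub_div_sq_le hlam (by linarith) hdD (by linarith)
    linarith
  by_cases hnear : |D - R| ≤ 2 * ℓ
  · rw [if_pos hnear]
    have hJd := coupling_mem_Icc hlam hgam hlg d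
    have hJD := coupling_mem_Icc hlam hgam hlg D
    linarith [abs_sub_le_of_nonneg_of_le hJd.1 hJd.2 hJD.1 hJD.2]
  · have hplateau : D < R - 2 * ℓ := by
      rcases lt_abs.mp (not_le.mp hnear) with h | h <;> linarith [not_lt.mp hfar]
    rw [coupling_of_abs_le (by rw [abs_of_nonneg hd]; linarith),
      coupling_of_abs_le (by rw [abs_of_nonneg hD]; linarith), sub_self, abs_zero]
    positivity

end coupling

/-- **Block comparison of the coupling on the `ℓ₋`-grid.** For every `λ > 0` there is
`γ₀ > 0` such that for all `γ ∈ (0, γ₀)` with `(2γ)⁻¹` a positive even integer, and every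
positive integer `ℓ₋` with `δ₋ := γ ℓ₋ ≤ 1/100`: for all `u,v ∈ ℓ₋ℤ` with `u ≠ v` and all
`x ∈ [u, u+ℓ₋) ∩ ℤ`, `y ∈ [v, v+ℓ₋) ∩ ℤ` with `x ≠ y`,
`|J_γ(|x−y|) − J_γ(|u−v|)| ≤ γ·𝟙[||u−v| − (2γ)⁻¹| ≤ 2ℓ₋] + (8λℓ₋/|u−v|³)·𝟙[|u−v| > (2γ)⁻¹ − 2ℓ₋]`. -/
theorem coupling_block_comparison (lam : ℝ) (hlam : 0 < lam) :
    ∃ γ₀ : ℝ, 0 < γ₀ ∧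
      ∀ gam : ℝ, 0 < gam → gam < γ₀ →
      (∃ M : ℕ, 0 < M ∧ Even M ∧ (M : ℝ) = (2 * gam)⁻¹) →
      ∀ ℓm : ℕ, 0 < ℓm → gam * ℓm ≤ 1 / 100 →
      ∀ a b : ℤ, a ≠ b →
      ∀ x y : ℤ, x ∈ Set.Ico (a * (ℓm : ℤ)) (a * (ℓm : ℤ) + ℓm) →
        y ∈ Set.Ico (b * (ℓm : ℤ)) (b * (ℓm : ℤ) + ℓm) → x ≠ y →
      abs (coupling lam gam (abs ((x : ℝ) - (y : ℝ))) -
           coupling lam gam (abs ((a * (ℓm : ℤ) : ℝ) - (b * (ℓm : ℤ) : ℝ))))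
        ≤ (if abs (abs ((a * (ℓm : ℤ) : ℝ) - (b * (ℓm : ℤ) : ℝ)) - (2 * gam)⁻¹) ≤ 2 * ℓm
             then gam else 0)
          + (if abs ((a * (ℓm : ℤ) : ℝ) - (b * (ℓm : ℤ) : ℝ)) > (2 * gam)⁻¹ - 2 * ℓm
             then 8 * lam * ℓm / abs ((a * (ℓm : ℤ) : ℝ) - (b * (ℓm : ℤ) : ℝ)) ^ 3 else 0) := by
  refine ⟨(4 * lam)⁻¹, by positivity, ?_⟩
  intro gam hgam hgam₀ _ ℓm _ _ a b _ x y hx hy _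
  have hlg : 4 * lam * gam ≤ 1 := by
    have := mul_lt_mul_of_pos_left hgam₀ (by positivity : 0 < 4 * lam)
    rw [mul_inv_cancel₀ (by positivity)] at this
    exact this.le
  have hdist : |(|(x : ℝ) - y| - |(a * (ℓm : ℤ) : ℝ) - (b * (ℓm : ℤ) : ℝ)|)| ≤ ℓm := by
    exact_mod_cast abs_abs_sub_sub_abs_sub_le_of_mem_Ico hx hy
  exact abs_coupling_sub_coupling_le hlam.le hgam hlg (abs_nonneg _) (abs_nonneg _) hdist
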